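/- arXiv:2209.04616 — 2 statements merged into one kernel-verified Lean document; each statement's English description precedes it below -/
import Mathlib

section
/- Suppose the linear design condition (LDC) holds and in addition the constant conditional variance condition (CCC) holds, i.e. Var(X | σ(BᵀX)) equals a constant matrix almost surely. Then Var(X | σ(BᵀX)) = Σ − Σ B (BᵀΣB)⁻¹ Bᵀ Σ almost surely. -/
/-!
Write `W = X - E[X | BᵀX]`. Since `W` is orthogonal in `L²` to every `σ(BᵀX)`-measurable
variable, `E[W Wᵀ] = Cov(X, W)`; by the LDC, `E[X | BᵀX] = a₀ + M BᵀX`, so `W` is affine in `X`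
and `Cov(X, W) = Σ (1 - B Mᵀ)`. Orthogonality of `W` to `BᵀX` gives the normal equations
`BᵀΣB Mᵀ = BᵀΣ`, whence `E[W Wᵀ] = Σ - ΣB(BᵀΣB)⁻¹BᵀΣ`. Under the CCC the conditional variance is
a constant, which must then be its own expectation `E[W Wᵀ]`.
-/

open MeasureTheory ProbabilityTheory Matrix

section Covariance

variable {Ω : Type*} {mΩ : MeasurableSpace Ω} {P : Measure Ω}

lemma covariance_congr_ae {X X' Y Y' : Ω → ℝ} (hX : X =ᵐ[P] X') (hY : Y =ᵐ[P] Y') :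
    cov[X, Y; P] = cov[X', Y'; P] := by
  unfold covariance
  rw [integral_congr_ae hX, integral_congr_ae hY]
  refine integral_congr_ae ?_
  filter_upwards [hX, hY] with ω hXω hYω
  rw [hXω, hYω]

noncomputable def covarianceMatrix {ι : Type*} (X : Ω → ι → ℝ) (P : Measure Ω) :
    Matrix ι ι ℝ :=
  Matrix.of fun i j => cov[(X · i), (X · j); P]

variable {ι : Type*} [Fintype ι] {X : Ω → ι → ℝ}

lemma memLp_mulVec_apply (hX : ∀ i, MemLp (X · i) 2 P) {α : Type*} (U : Matrix α ι ℝ)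
    (a : α) : MemLp (fun ω => (U *ᵥ X ω) a) 2 P :=
  memLp_finsetSum _ fun i _ => (hX i).const_mul (U a i)

lemma covariance_mulVec_mulVec [IsFiniteMeasure P] (hX : ∀ i, MemLp (X · i) 2 P)
    {α β : Type*} (U : Matrix α ι ℝ) (V : Matrix β ι ℝ) (a : α) (b : β) :
    cov[fun ω => (U *ᵥ X ω) a, fun ω => (V *ᵥ X ω) b; P] =
      (U * covarianceMatrix X P * Vᵀ) a b := by
  simp only [mulVec, dotProduct]
  rw [covariance_fun_sum_fun_sum (fun i => (hX i).const_mul (U a i))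
    (fun j => (hX j).const_mul (V b j))]
  simp only [covariance_const_mul_left, covariance_const_mul_right, Matrix.mul_apply,
    covarianceMatrix, of_apply, transpose_apply, Finset.sum_mul]
  rw [Finset.sum_comm]
  exact Finset.sum_congr rfl fun i _ => Finset.sum_congr rfl fun j _ => by ring

end Covariance

section CondExp

variable {Ω : Type*} {m mΩ : MeasurableSpace Ω} {P : Measure Ω} {f g : Ω → ℝ}

lemma integral_sub_condExp_eq_zero [IsFiniteMeasure P] (hm : m ≤ mΩ) (hf : Integrable f P) :
    ∫ ω, (f - P[f|m]) ω ∂P = 0 := by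
  simp only [Pi.sub_apply]
  rw [integral_sub hf integrable_condExp, integral_condExp hm, sub_self]

lemma integral_mul_condExp_of_stronglyMeasurable [IsFiniteMeasure P] (hm : m ≤ mΩ)
    (hgm : StronglyMeasurable[m] g) (hgf : Integrable (fun ω => g ω * f ω) P)
    (hf : Integrable f P) :
    ∫ ω, g ω * P[f|m] ω ∂P = ∫ ω, g ω * f ω ∂P :=
  calc ∫ ω, g ω * P[f|m] ω ∂P = ∫ ω, P[g * f|m] ω ∂P :=
        integral_congr_ae (condExp_mul_of_stronglyMeasurable_left hgm hgf hf).symm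
    _ = ∫ ω, g ω * f ω ∂P := integral_condExp hm

variable [IsProbabilityMeasure P]

lemma covariance_sub_condExp_eq_zero (hm : m ≤ mΩ) (hf : MemLp f 2 P) (hg : MemLp g 2 P)
    (hgm : StronglyMeasurable[m] g) :
    cov[g, f - P[f|m]; P] = 0 := by
  have hf₁ : Integrable f P := hf.integrable one_le_two
  have hgf : Integrable (fun ω => g ω * f ω) P := hg.integrable_mul hf
  have hgcf : Integrable (fun ω => g ω * P[f|m] ω) P := hg.integrable_mul (hf.condExp one_le_two)
  rw [covariance_eq_sub hg (hf.sub (hf.condExp one_le_two)), integral_sub_condExp_eq_zero hm hf₁,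
    mul_zero, sub_zero, mul_sub]
  simp only [Pi.sub_apply, Pi.mul_apply]
  rw [integral_sub hgf hgcf, integral_mul_condExp_of_stronglyMeasurable hm hgm hgf hf₁, sub_self]

lemma integral_eq_of_condExp_ae_eq_const (hm : m ≤ mΩ) {c : ℝ} (h : P[f|m] =ᵐ[P] fun _ => c) :
    ∫ ω, f ω ∂P = c := by
  rw [← integral_condExp hm, integral_congr_ae h, integral_const, probReal_univ, one_smul]

end CondExp

lemma mul_one_sub_eq_of_normal_equations {R ι κ : Type*} [CommRing R] [Fintype ι]
    [Fintype κ] [DecidableEq ι] [DecidableEq κ] {S : Matrix ι ι R} {B M : Matrix ι κ R}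
    (hBSB : IsUnit (Bᵀ * S * B).det) (h : Bᵀ * S * (1 - B * Mᵀ) = 0) :
    S * (1 - B * Mᵀ) = S - S * B * (Bᵀ * S * B)⁻¹ * Bᵀ * S := by
  have hnormal : Bᵀ * S * B * Mᵀ = Bᵀ * S := by
    rw [Matrix.mul_sub, Matrix.mul_one, sub_eq_zero] at h
    exact (Matrix.mul_assoc _ _ _).trans h.symm
  have hM : Mᵀ = (Bᵀ * S * B)⁻¹ * (Bᵀ * S) :=
    calc Mᵀ = (Bᵀ * S * B)⁻¹ * (Bᵀ * S * B) * Mᵀ := by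
          rw [nonsing_inv_mul _ hBSB, Matrix.one_mul]
      _ = (Bᵀ * S * B)⁻¹ * (Bᵀ * S) := by rw [Matrix.mul_assoc, hnormal]
  simp only [hM, Matrix.mul_sub, Matrix.mul_one, Matrix.mul_assoc]

section LinearConditionalMean

variable {Ω ι κ : Type*} [Fintype ι] [DecidableEq ι] [Fintype κ] {m mΩ : MeasurableSpace Ω}
  {P : Measure Ω} {X : Ω → ι → ℝ} {B M : Matrix ι κ ℝ} {a₀ : ι → ℝ}

lemma sub_condExp_ae_eq_of_condExp_ae_eq
    (hM : ∀ i, P[(X · i)|m] =ᵐ[P] fun ω => a₀ i + (M *ᵥ (Bᵀ *ᵥ X ω)) i) (i : ι) :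
    (X · i) - P[(X · i)|m] =ᵐ[P] fun ω => ((1 - M * Bᵀ) *ᵥ X ω) i - a₀ i := by
  filter_upwards [hM i] with ω hω
  rw [Pi.sub_apply, hω, sub_mulVec, one_mulVec, mulVec_mulVec, Pi.sub_apply]
  ring

variable [IsProbabilityMeasure P]

lemma covariance_mulVec_sub_condExp (hX : ∀ i, MemLp (X · i) 2 P)
    (hM : ∀ i, P[(X · i)|m] =ᵐ[P] fun ω => a₀ i + (M *ᵥ (Bᵀ *ᵥ X ω)) i)
    {α : Type*} (U : Matrix α ι ℝ) (a : α) (i : ι) :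
    cov[fun ω => (U *ᵥ X ω) a, (X · i) - P[(X · i)|m]; P] =
      (U * covarianceMatrix X P * (1 - B * Mᵀ) : Matrix α ι ℝ) a i := by
  rw [covariance_congr_ae .rfl (sub_condExp_ae_eq_of_condExp_ae_eq hM i),
    covariance_sub_const_right ((memLp_mulVec_apply hX _ i).integrable one_le_two),
    covariance_mulVec_mulVec hX, transpose_sub, transpose_one, transpose_mul, transpose_transpose]

lemma transpose_mul_covarianceMatrix_mul_eq_zero (hm : m ≤ mΩ) (hX : ∀ i, MemLp (X · i) 2 P)
    (hBX : ∀ k, StronglyMeasurable[m] fun ω => (Bᵀ *ᵥ X ω) k)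
    (hM : ∀ i, P[(X · i)|m] =ᵐ[P] fun ω => a₀ i + (M *ᵥ (Bᵀ *ᵥ X ω)) i) :
    Bᵀ * covarianceMatrix X P * (1 - B * Mᵀ) = 0 := by
  ext k i
  rw [← covariance_mulVec_sub_condExp hX hM,
    covariance_sub_condExp_eq_zero hm (hX i) (memLp_mulVec_apply hX _ k) (hBX k), Matrix.zero_apply]

lemma integral_sub_condExp_mul_sub_condExp (hm : m ≤ mΩ) (hX : ∀ i, MemLp (X · i) 2 P)
    (hM : ∀ i, P[(X · i)|m] =ᵐ[P] fun ω => a₀ i + (M *ᵥ (Bᵀ *ᵥ X ω)) i) (i j : ι) :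
    ∫ ω, (X ω i - P[(X · i)|m] ω) * (X ω j - P[(X · j)|m] ω) ∂P =
      (covarianceMatrix X P * (1 - B * Mᵀ) : Matrix ι ι ℝ) i j := by
  have hCE : MemLp P[(X · i)|m] 2 P := (hX i).condExp one_le_two
  have hW : MemLp ((X · j) - P[(X · j)|m]) 2 P := (hX j).sub ((hX j).condExp one_le_two)
  have hcov := covariance_mulVec_sub_condExp hX hM 1 i j
  simp only [one_mulVec, Matrix.one_mul] at hcov
  calc ∫ ω, (X ω i - P[(X · i)|m] ω) * (X ω j - P[(X · j)|m] ω) ∂P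
      = cov[(X · i) - P[(X · i)|m], (X · j) - P[(X · j)|m]; P] := by
        rw [covariance, integral_sub_condExp_eq_zero hm ((hX i).integrable one_le_two),
          integral_sub_condExp_eq_zero hm ((hX j).integrable one_le_two)]
        simp only [sub_zero, Pi.sub_apply]
    _ = cov[(X · i), (X · j) - P[(X · j)|m]; P] - cov[P[(X · i)|m], (X · j) - P[(X · j)|m]; P] :=
        covariance_sub_left (hX i) hCE hW
    _ = (covarianceMatrix X P * (1 - B * Mᵀ) : Matrix ι ι ℝ) i j := by
        rw [hcov, covariance_sub_condExp_eq_zero hm (hX j) hCE stronglyMeasurable_condExp,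
          sub_zero]

lemma integral_sub_condExp_mul_sub_condExp_of_isUnit_det [DecidableEq κ] (hm : m ≤ mΩ)
    (hX : ∀ i, MemLp (X · i) 2 P) (hBX : ∀ k, StronglyMeasurable[m] fun ω => (Bᵀ *ᵥ X ω) k)
    (hM : ∀ i, P[(X · i)|m] =ᵐ[P] fun ω => a₀ i + (M *ᵥ (Bᵀ *ᵥ X ω)) i)
    (hBSB : IsUnit (Bᵀ * covarianceMatrix X P * B).det) (i j : ι) :
    ∫ ω, (X ω i - P[(X · i)|m] ω) * (X ω j - P[(X · j)|m] ω) ∂P =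
      (covarianceMatrix X P - covarianceMatrix X P * B *
        (Bᵀ * covarianceMatrix X P * B)⁻¹ * Bᵀ * covarianceMatrix X P) i j := by
  rw [integral_sub_condExp_mul_sub_condExp hm hX hM, mul_one_sub_eq_of_normal_equations
    hBSB (transpose_mul_covarianceMatrix_mul_eq_zero hm hX hBX hM)]

end LinearConditionalMean

/-- under the linear design condition and the constant conditional
variance condition, `Var(X | σ(BᵀX)) = Σ − Σ B (BᵀΣB)⁻¹ Bᵀ Σ` a.s. (entrywise). -/
theorem stmt_8 {Ω : Type*} [MeasurableSpace Ω] (P : Measure Ω) [IsProbabilityMeasure P]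
    {p K : ℕ} (X : Ω → Fin p → ℝ) (hX : Measurable X)
    (hX2 : ∀ i, MemLp (fun ω => X ω i) 2 P)
    (μ : Fin p → ℝ) (hμ : ∀ i, μ i = ∫ ω, X ω i ∂P)
    (Sig : Matrix (Fin p) (Fin p) ℝ)
    (hSig : ∀ i j, Sig i j = ∫ ω, (X ω i - μ i) * (X ω j - μ j) ∂P)
    (hSigInv : IsUnit Sig.det)
    (β : Fin K → (Fin p → ℝ)) (B : Matrix (Fin p) (Fin K) ℝ) (hB : ∀ i k, B i k = β k i)
    (hBSB : IsUnit (Bᵀ * Sig * B).det)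
    -- the σ-algebra σ(BᵀX) and the conditional variance entries
    (mB : MeasurableSpace Ω)
    (hmB : mB = MeasurableSpace.comap (fun ω => Bᵀ *ᵥ X ω) inferInstance)
    (CV : Fin p → Fin p → Ω → ℝ)
    (hCV : ∀ i j, CV i j =
      P[(fun ω => (X ω i - (P[(fun ω' => X ω' i) | mB]) ω) *
          (X ω j - (P[(fun ω' => X ω' j) | mB]) ω)) | mB])
    -- LDC
    (hLDC : ∀ b : Fin p → ℝ, ∃ (a₀ : ℝ) (a : Fin K → ℝ),
      P[(fun ω => b ⬝ᵥ X ω) | mB] =ᵐ[P] fun ω => a₀ + ∑ k, a k * (β k ⬝ᵥ X ω))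
    -- CCC
    (hCCC : ∃ C : Matrix (Fin p) (Fin p) ℝ, ∀ i j, CV i j =ᵐ[P] fun _ => C i j) :
    ∀ i j, CV i j =ᵐ[P] fun _ => (Sig - Sig * B * (Bᵀ * Sig * B)⁻¹ * Bᵀ * Sig) i j := by
  intro i j
  obtain ⟨C, hC⟩ := hCCC
  subst hmB
  have hle : MeasurableSpace.comap (fun ω => Bᵀ *ᵥ X ω) inferInstance ≤ ‹_› :=
    (by fun_prop : Measurable fun ω => Bᵀ *ᵥ X ω).comap_le
  have hBX : ∀ k, StronglyMeasurable[MeasurableSpace.comap (fun ω => Bᵀ *ᵥ X ω) inferInstance]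
      fun ω => (Bᵀ *ᵥ X ω) k :=
    fun k => ((measurable_pi_apply k).comp
      (comap_measurable fun ω => Bᵀ *ᵥ X ω)).stronglyMeasurable
  have hSig' : Sig = covarianceMatrix X P := by
    ext i j
    simp only [hSig, hμ, covarianceMatrix, covariance, of_apply]
  choose a₀ a ha using fun j => hLDC (Pi.single j 1)
  have hM : ∀ j, P[(X · j)|MeasurableSpace.comap (fun ω => Bᵀ *ᵥ X ω) inferInstance] =ᵐ[P]
      fun ω => a₀ j + (Matrix.of a *ᵥ (Bᵀ *ᵥ X ω)) j := by
    intro j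
    have hcoord : ∀ ω, (Matrix.of a *ᵥ (Bᵀ *ᵥ X ω)) j = ∑ k, a j k * (β k ⬝ᵥ X ω) := by
      simp [mulVec, dotProduct, hB]
    simpa only [single_one_dotProduct, hcoord] using ha j
  subst hSig'
  rw [← integral_sub_condExp_mul_sub_condExp_of_isUnit_det hle hX2 hBX hM hBSB i j,
    integral_eq_of_condExp_ae_eq_const hle ((hCV i j) ▸ hC i j)]
  exact hC i j
end

section
/- Let G be a Borel probability measure on ℝ × ℝ^p with finite second moments, w₀ = (y₀, x₀) ∈ ℝ × ℝ^p, and G_ε = (1 − ε)G + ε δ_{w₀} for ε ∈ [0, 1). Let S ⊆ ℝ be a Borel set with w = G(S × ℝ^p) > 0, and let μ_S ∈ ℝ^p denote the conditional mean of X given {Y ∈ S} under G and Σ_S = Var_G(X | Y ∈ S) the conditional variance matrix. Then the map ε ↦ Var_{G_ε}(X | Y ∈ S) is right-differentiable at ε = 0, with derivative 1{y₀ ∈ S} · (1/w) · [ (x₀ − μ_S)(x₀ − μ_S)ᵀ − Σ_S ]. -/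
/-!
Under the contamination `G_ε = (1 - ε) G + ε δ_{w₀}`, every conditional expectation given
`A = {Y ∈ S}` is a ratio of affine functions of `ε`,
`E_ε[g | A] = ((1 - ε) ∫_A g dG + ε 1_A(w₀) g(w₀)) / ((1 - ε) G(A) + ε 1_A(w₀))`,
whose right derivative at `0` is `1_A(w₀) / G(A) · (g(w₀) - E[g | A])`. For `ε < 1` we have
`G_ε(A) > 0`, so `G_ε[|A]` is a probability measure and the conditional covariance is
`E_ε[XY | A] - E_ε[X | A] E_ε[Y | A]`; the product rule then gives the influence function.
-/

open MeasureTheory ProbabilityTheory Set Filter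

theorem hasDerivAt_mixture_ratio {N D b c : ℝ} (hD : D ≠ 0) :
    HasDerivAt (fun ε : ℝ => ((1 - ε) * N + ε * (c * b)) / ((1 - ε) * D + ε * c))
      (c / D * (b - N / D)) 0 := by
  have hlin (u v : ℝ) : HasDerivAt (fun ε : ℝ => (1 - ε) * u + ε * v) (v - u) 0 :=
    ((((hasDerivAt_id (0 : ℝ)).const_sub 1).mul_const u).add
      ((hasDerivAt_id (0 : ℝ)).mul_const v)).congr_deriv (by simp; ring)
  refine ((hlin N (c * b)).div (hlin D c) (by simpa using hD)).congr_deriv ?_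
  simp only [sub_zero, one_mul, zero_mul, add_zero]
  field_simp
  ring

namespace MeasureTheory

variable {α : Type*} [MeasurableSpace α] {μ ν : Measure α}

theorem MemLp.add_measure_two {f : α → ℝ} (hμ : MemLp f 2 μ) (hν : MemLp f 2 ν) :
    MemLp f 2 (μ + ν) :=
  (memLp_two_iff_integrable_sq (hμ.1.add_measure hν.1)).2
    (hμ.integrable_sq.add_measure hν.integrable_sq)

theorem memLp_dirac {E : Type*} [NormedAddCommGroup E] [MeasurableSingletonClass α]
    {p : ENNReal} (f : α → E) (a : α) :
    MemLp f p (Measure.dirac a) := by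
  rcases eq_or_ne p 0 with rfl | hp
  · exact memLp_zero_iff_aestronglyMeasurable.2 aestronglyMeasurable_dirac
  · exact ⟨aestronglyMeasurable_dirac, by simp [eLpNorm_dirac f a hp]⟩

theorem MemLp.cond {E : Type*} [NormedAddCommGroup E] {f : α → E} {p : ENNReal}
    (hf : MemLp f p μ) {s : Set α} (hs : μ s ≠ 0) : MemLp f p μ[|s] :=
  (hf.restrict s).smul_measure (ENNReal.inv_ne_top.2 hs)

end MeasureTheory

namespace ProbabilityTheory

variable {Ω : Type*} [MeasurableSpace Ω]

theorem integral_cond_eq_inv_mul_setIntegral (μ : Measure Ω) (s : Set Ω) (g : Ω → ℝ) :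
    ∫ z, g z ∂μ[|s] = (μ.real s)⁻¹ * ∫ z in s, g z ∂μ := by
  rw [cond, integral_smul_measure, ENNReal.toReal_inv, smul_eq_mul, measureReal_def]

/-- The contaminated measure `G_ε` of the paper. Since `ENNReal.ofReal` truncates at `0`, it is
the mixture `(1 - ε) μ + ε δ_a` only for `ε ∈ [0, 1]`. -/
noncomputable def contamination (μ : Measure Ω) (a : Ω) (ε : ℝ) : Measure Ω :=
  ENNReal.ofReal (1 - ε) • μ + ENNReal.ofReal ε • Measure.dirac a

variable {μ : Measure Ω} {a : Ω} {ε : ℝ} {A : Set Ω}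

@[simp]
theorem contamination_zero : contamination μ a 0 = μ := by
  simp [contamination]

instance [IsFiniteMeasure μ] : IsFiniteMeasure (contamination μ a ε) := by
  have := μ.smul_finite (ENNReal.ofReal_ne_top (r := 1 - ε))
  have := (Measure.dirac a).smul_finite (ENNReal.ofReal_ne_top (r := ε))
  unfold contamination
  infer_instance

theorem contamination_apply_ne_zero (hε : ε < 1) (hμA : μ A ≠ 0) :
    contamination μ a ε A ≠ 0 := by
  simp [contamination, hε, hμA]

theorem measureReal_contamination [IsFiniteMeasure μ] (hε : ε ∈ Icc (0 : ℝ) 1)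
    (hA : MeasurableSet A) :
    (contamination μ a ε).real A = (1 - ε) * μ.real A + ε * A.indicator 1 a := by
  have hdirac : (Measure.dirac a).real A = A.indicator 1 a := by
    by_cases ha : a ∈ A <;> simp [Measure.real, Measure.dirac_apply' _ hA, ha]
  have hfin (c : ℝ) (ν : Measure Ω) [IsFiniteMeasure ν] : (ENNReal.ofReal c • ν) A ≠ ⊤ :=
    ENNReal.mul_ne_top ENNReal.ofReal_ne_top (measure_ne_top ν A)
  rw [contamination, measureReal_add_apply (hfin _ _) (hfin _ _), measureReal_ennreal_smul_apply,
    measureReal_ennreal_smul_apply, ENNReal.toReal_ofReal (sub_nonneg.2 hε.2),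
    ENNReal.toReal_ofReal hε.1, hdirac]

variable [MeasurableSingletonClass Ω]

theorem _root_.MeasureTheory.MemLp.contamination {f : Ω → ℝ} (hf : MemLp f 2 μ) :
    MemLp f 2 (contamination μ a ε) :=
  (hf.smul_measure ENNReal.ofReal_ne_top).add_measure_two
    ((memLp_dirac f a).smul_measure ENNReal.ofReal_ne_top)

theorem setIntegral_contamination (hε : ε ∈ Icc (0 : ℝ) 1) {g : Ω → ℝ}
    (hg : IntegrableOn g A μ) :
    ∫ z in A, g z ∂contamination μ a ε
      = (1 - ε) * ∫ z in A, g z ∂μ + ε * (A.indicator 1 a * g a) := by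
  classical
  have hg_dirac : IntegrableOn g A (Measure.dirac a) := (integrable_dirac (by simp)).restrict
  rw [contamination, Measure.restrict_add, Measure.restrict_smul, Measure.restrict_smul,
    integral_add_measure (hg.smul_measure ENNReal.ofReal_ne_top)
      (hg_dirac.smul_measure ENNReal.ofReal_ne_top),
    integral_smul_measure, integral_smul_measure, ENNReal.toReal_ofReal (sub_nonneg.2 hε.2),
    ENNReal.toReal_ofReal hε.1, setIntegral_dirac, smul_eq_mul, smul_eq_mul]
  by_cases ha : a ∈ A <;> simp [ha]

theorem integral_cond_contamination [IsFiniteMeasure μ] (hε : ε ∈ Icc (0 : ℝ) 1)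
    (hA : MeasurableSet A) {g : Ω → ℝ} (hg : IntegrableOn g A μ) :
    ∫ z, g z ∂(contamination μ a ε)[|A]
      = ((1 - ε) * ∫ z in A, g z ∂μ + ε * (A.indicator 1 a * g a))
        / ((1 - ε) * μ.real A + ε * A.indicator 1 a) := by
  rw [integral_cond_eq_inv_mul_setIntegral, setIntegral_contamination hε hg,
    measureReal_contamination hε hA, inv_mul_eq_div]

theorem hasDerivWithinAt_integral_cond_contamination [IsFiniteMeasure μ] (hA : MeasurableSet A)
    (hμA : μ.real A ≠ 0) {g : Ω → ℝ} (hg : IntegrableOn g A μ) :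
    HasDerivWithinAt (fun ε => ∫ z, g z ∂(contamination μ a ε)[|A])
      (A.indicator 1 a / μ.real A * (g a - ∫ z, g z ∂μ[|A])) (Ici 0) 0 := by
  rw [integral_cond_eq_inv_mul_setIntegral, inv_mul_eq_div]
  refine (hasDerivAt_mixture_ratio hμA).hasDerivWithinAt.congr_of_eventuallyEq ?_ ?_
  · filter_upwards [Icc_mem_nhdsGE zero_lt_one] with ε hε
    exact integral_cond_contamination hε hA hg
  · exact integral_cond_contamination ⟨le_rfl, zero_le_one⟩ hA hg

theorem covariance_cond_contamination [IsFiniteMeasure μ] (hε : ε < 1) (hμA : μ A ≠ 0)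
    {X Y : Ω → ℝ} (hX : MemLp X 2 μ) (hY : MemLp Y 2 μ) :
    cov[X, Y; (contamination μ a ε)[|A]]
      = ∫ z, (X * Y) z ∂(contamination μ a ε)[|A]
        - (∫ z, X z ∂(contamination μ a ε)[|A]) * ∫ z, Y z ∂(contamination μ a ε)[|A] := by
  have hA := contamination_apply_ne_zero (a := a) hε hμA
  have := cond_isProbabilityMeasure hA
  exact covariance_eq_sub (hX.contamination.cond hA) (hY.contamination.cond hA)

theorem hasDerivWithinAt_covariance_cond_contamination [IsFiniteMeasure μ]
    (hA : MeasurableSet A) (hμA : μ.real A ≠ 0) {X Y : Ω → ℝ} (hX : MemLp X 2 μ)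
    (hY : MemLp Y 2 μ) :
    HasDerivWithinAt (fun ε => cov[X, Y; (contamination μ a ε)[|A]])
      (A.indicator 1 a / μ.real A *
        ((X a - ∫ z, X z ∂μ[|A]) * (Y a - ∫ z, Y z ∂μ[|A]) - cov[X, Y; μ[|A]])) (Ici 0) 0 := by
  have hμA' : μ A ≠ 0 := (measureReal_ne_zero_iff).1 hμA
  have hXY := hasDerivWithinAt_integral_cond_contamination (a := a) hA hμA
    (hX.integrable_mul hY).integrableOn
  have hX' := hasDerivWithinAt_integral_cond_contamination (a := a) hA hμA
    (hX.integrable one_le_two).integrableOn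
  have hY' := hasDerivWithinAt_integral_cond_contamination (a := a) hA hμA
    (hY.integrable one_le_two).integrableOn
  refine ((hXY.sub (hX'.mul hY')).congr_of_eventuallyEq ?_ ?_).congr_deriv ?_
  · filter_upwards [Ico_mem_nhdsGE zero_lt_one] with ε hε
    exact covariance_cond_contamination hε.2 hμA' hX hY
  · exact covariance_cond_contamination zero_lt_one hμA' hX hY
  · have hcov := covariance_cond_contamination (a := a) zero_lt_one hμA' hX hY
    simp only [contamination_zero] at hcov ⊢
    rw [hcov, Pi.mul_apply]
    ring

end ProbabilityTheory

theorem stmt_17_general {p : ℕ} (G : Measure (ℝ × (Fin p → ℝ))) [IsProbabilityMeasure G]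
    (hG2x : ∀ i, MemLp (fun z : ℝ × (Fin p → ℝ) => z.2 i) 2 G)
    (y₀ : ℝ) (x₀ : Fin p → ℝ)
    (S : Set ℝ) (hS : MeasurableSet S)
    (w : ℝ) (hw : w = (G (Prod.fst ⁻¹' S)).toReal) (hwpos : 0 < w)
    (μS : Fin p → ℝ) (hμS : ∀ i, μS i = ∫ z, z.2 i ∂(G[|Prod.fst ⁻¹' S]))
    (SigS : Matrix (Fin p) (Fin p) ℝ)
    (hSigS : ∀ i j, SigS i j = ∫ z, (z.2 i - μS i) * (z.2 j - μS j) ∂(G[|Prod.fst ⁻¹' S])) :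
    ∀ i j, HasDerivWithinAt
      (fun ε : ℝ =>
        let Gε : Measure (ℝ × (Fin p → ℝ)) :=
          ENNReal.ofReal (1 - ε) • G + ENNReal.ofReal ε • Measure.dirac (y₀, x₀)
        ∫ z, (z.2 i - ∫ z', z'.2 i ∂(Gε[|Prod.fst ⁻¹' S])) *
            (z.2 j - ∫ z', z'.2 j ∂(Gε[|Prod.fst ⁻¹' S])) ∂(Gε[|Prod.fst ⁻¹' S]))
      (S.indicator (fun _ => (1 : ℝ)) y₀ * (1 / w) *
        ((x₀ i - μS i) * (x₀ j - μS j) - SigS i j))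
      (Set.Ici 0) 0 := by
  intro i j
  have hGA : G.real (Prod.fst ⁻¹' S) ≠ 0 := by rw [measureReal_def, ← hw]; exact hwpos.ne'
  have hderiv := hasDerivWithinAt_covariance_cond_contamination (a := (y₀, x₀))
    (measurable_fst hS) hGA (hG2x i) (hG2x j)
  have hindicator : (Prod.fst ⁻¹' S).indicator 1 (y₀, x₀) = S.indicator (fun _ => (1 : ℝ)) y₀ :=
    Set.indicator_comp_right (g := fun _ => (1 : ℝ)) Prod.fst
  refine hderiv.congr_deriv ?_
  rw [hindicator, hSigS, hw, ← measureReal_def]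
  simp only [covariance, hμS]
  ring

/-- the fixed-slice influence function of the slice variance matrix: under
`ε`-contamination `G_ε = (1−ε)G + ε δ_{(y₀,x₀)}`, the map `ε ↦ Var_{G_ε}(X | Y ∈ S)` is
right-differentiable at `0` with derivative
`1{y₀ ∈ S} (1/w) [(x₀ − μ_S)(x₀ − μ_S)ᵀ − Σ_S]` (entrywise). -/
theorem stmt_17 {p : ℕ} (G : Measure (ℝ × (Fin p → ℝ))) [IsProbabilityMeasure G]
    (hG2y : MemLp (fun z : ℝ × (Fin p → ℝ) => z.1) 2 G)
    (hG2x : ∀ i, MemLp (fun z : ℝ × (Fin p → ℝ) => z.2 i) 2 G)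
    (y₀ : ℝ) (x₀ : Fin p → ℝ)
    (S : Set ℝ) (hS : MeasurableSet S)
    (w : ℝ) (hw : w = (G (Prod.fst ⁻¹' S)).toReal) (hwpos : 0 < w)
    (μS : Fin p → ℝ) (hμS : ∀ i, μS i = ∫ z, z.2 i ∂(G[|Prod.fst ⁻¹' S]))
    (SigS : Matrix (Fin p) (Fin p) ℝ)
    (hSigS : ∀ i j, SigS i j = ∫ z, (z.2 i - μS i) * (z.2 j - μS j) ∂(G[|Prod.fst ⁻¹' S])) :
    ∀ i j, HasDerivWithinAt
      (fun ε : ℝ =>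
        let Gε : Measure (ℝ × (Fin p → ℝ)) :=
          ENNReal.ofReal (1 - ε) • G + ENNReal.ofReal ε • Measure.dirac (y₀, x₀)
        ∫ z, (z.2 i - ∫ z', z'.2 i ∂(Gε[|Prod.fst ⁻¹' S])) *
            (z.2 j - ∫ z', z'.2 j ∂(Gε[|Prod.fst ⁻¹' S])) ∂(Gε[|Prod.fst ⁻¹' S]))
      (S.indicator (fun _ => (1 : ℝ)) y₀ * (1 / w) *
        ((x₀ i - μS i) * (x₀ j - μS j) - SigS i j))
      (Set.Ici 0) 0 :=
  stmt_17_general G hG2x y₀ x₀ S hS w hw hwpos μS hμS SigS hSigS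
end
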